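/- arXiv:1502.04685 — 2 statements merged into one kernel-verified Lean document; each statement's English description precedes it below -/
import Mathlib

section
/- Let X and Y be Banach spaces with X compactly embedded in Y, and let f: X → ℝ be a seminorm on X that is continuous with respect to the X-norm. Suppose that for some closed finite-dimensional subspace P ⊆ X the following holds: if v ∈ P with f(v) = 0 then v = 0; and suppose there is a seminorm g on X such that ‖v‖_X is equivalent to g(v) + ‖v‖_Y and g(v) = 0 implies v ∈ P, with g continuous on X and lower semicontinuous with respect to Y-convergence on X-bounded sets. Then there exists C > 0 such that ‖v‖_X ≤ C (g(v) + f(v)) for all v ∈ X. -/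
/-!
Were there no such `C`, there would be unit vectors `u k` with `g (u k) + f (u k) → 0`.
By compactness of `ι` a subsequence of `ι (u k)` converges in `Y`, and the equivalence
`c₁ ‖v‖ ≤ g v + ‖ι v‖` applied to differences makes that subsequence Cauchy in `X`.
Its limit `w` is a unit vector with `g w = 0`, so `w ∈ P`, and `f w = 0`, so `w = 0`.
-/

open Filter Topology

theorem IsCompactOperator.exists_subseq_tendsto {𝕜 X Y : Type*} [NontriviallyNormedField 𝕜]
    [SeminormedAddCommGroup X] [NormedSpace 𝕜 X] [NormedAddCommGroup Y] [NormedSpace 𝕜 Y]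
    {ι : X →L[𝕜] Y} (hι : IsCompactOperator ι) {u : ℕ → X}
    (hu : Bornology.IsBounded (Set.range u)) :
    ∃ y, ∃ φ : ℕ → ℕ, StrictMono φ ∧ Tendsto (fun k => ι (u (φ k))) atTop (𝓝 y) := by
  obtain ⟨K, hK, hιK⟩ := hι.image_subset_compact_of_bounded (f := (ι : X →ₗ[𝕜] Y)) hu
  obtain ⟨y, -, φ, hφ, hy⟩ := hK.tendsto_subseq fun k => hιK ⟨u k, Set.mem_range_self k, rfl⟩
  exact ⟨y, φ, hφ, hy⟩

section Peetre

variable {X Y : Type*} [NormedAddCommGroup X] [NormedSpace ℝ X]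
  [NormedAddCommGroup Y] [NormedSpace ℝ Y]

theorem cauchySeq_of_tendsto_seminorm_zero {ι : X →L[ℝ] Y} (g : Seminorm ℝ X) {c : ℝ}
    (hc : 0 < c) (hequiv : ∀ v, c * ‖v‖ ≤ g v + ‖ι v‖) {u : ℕ → X}
    (hg : Tendsto (fun k => g (u k)) atTop (𝓝 0)) (hιu : CauchySeq fun k => ι (u k)) :
    CauchySeq u := by
  rw [cauchySeq_iff_tendsto_dist_atTop_0, ← prod_atTop_atTop_eq] at hιu ⊢
  have hdist : ∀ n : ℕ × ℕ,
      dist (u n.1) (u n.2) ≤ c⁻¹ * (g (u n.1) + g (u n.2) + dist (ι (u n.1)) (ι (u n.2))) := by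
    intro n
    rw [dist_eq_norm, dist_eq_norm, ← map_sub, le_inv_mul_iff₀ hc]
    linarith [hequiv (u n.1 - u n.2), map_sub_le_add g (u n.1) (u n.2)]
  have hbound : Tendsto (fun n : ℕ × ℕ =>
      c⁻¹ * (g (u n.1) + g (u n.2) + dist (ι (u n.1)) (ι (u n.2)))) (atTop ×ˢ atTop) (𝓝 0) := by
    simpa using ((hg.comp tendsto_fst).add (hg.comp tendsto_snd)).add hιu |>.const_mul c⁻¹
  exact squeeze_zero (fun _ => dist_nonneg) hdist hbound

theorem exists_subseq_tendsto_of_tendsto_seminorm_zero [CompleteSpace X] {ι : X →L[ℝ] Y}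
    (hι : IsCompactOperator ι) (g : Seminorm ℝ X) {c : ℝ} (hc : 0 < c)
    (hequiv : ∀ v, c * ‖v‖ ≤ g v + ‖ι v‖) {u : ℕ → X} (hu : Bornology.IsBounded (Set.range u))
    (hg : Tendsto (fun k => g (u k)) atTop (𝓝 0)) :
    ∃ w, ∃ φ : ℕ → ℕ, StrictMono φ ∧ Tendsto (fun k => u (φ k)) atTop (𝓝 w) := by
  obtain ⟨y, φ, hφ, hy⟩ := hι.exists_subseq_tendsto hu
  have hcauchy : CauchySeq fun k => u (φ k) :=
    cauchySeq_of_tendsto_seminorm_zero g hc hequiv (hg.comp hφ.tendsto_atTop) hy.cauchySeq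
  obtain ⟨w, hw⟩ := cauchySeq_tendsto_of_complete hcauchy
  exact ⟨w, φ, hφ, hw⟩

end Peetre

theorem exists_norm_le_mul_of_not_tendsto_zero {X : Type*} [NormedAddCommGroup X]
    [NormedSpace ℝ X] {p : X → ℝ} (hp0 : ∀ v, 0 ≤ p v)
    (hpsmul : ∀ (a : ℝ) v, p (a • v) = |a| * p v)
    (h : ∀ u : ℕ → X, (∀ k, ‖u k‖ = 1) → ¬Tendsto (fun k => p (u k)) atTop (𝓝 0)) :
    ∃ C > 0, ∀ v, ‖v‖ ≤ C * p v := by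
  by_contra! hcon
  choose v hv using fun k : ℕ => hcon ((k : ℝ) + 1) k.cast_add_one_pos
  have hvpos : ∀ k, 0 < ‖v k‖ := fun k =>
    (mul_nonneg k.cast_add_one_pos.le (hp0 (v k))).trans_lt (hv k)
  refine h (fun k => ‖v k‖⁻¹ • v k) (fun k => ?_) ?_
  · rw [norm_smul, norm_inv, norm_norm, inv_mul_cancel₀ (hvpos k).ne']
  · refine squeeze_zero (fun k => hp0 _) (fun k => ?_) tendsto_one_div_add_atTop_nhds_zero_nat
    rw [hpsmul, abs_of_pos (inv_pos.mpr (hvpos k)), inv_mul_le_iff₀ (hvpos k),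
      mul_one_div, le_div_iff₀ k.cast_add_one_pos, mul_comm]
    exact (hv k).le

theorem statement7_general {X Y : Type*} [NormedAddCommGroup X] [NormedSpace ℝ X] [CompleteSpace X]
    [NormedAddCommGroup Y] [NormedSpace ℝ Y]
    (ι : X →L[ℝ] Y) (hcpt : IsCompactOperator ι)
    (f g : X → ℝ)
    -- `f` is a seminorm, continuous in the `X`-norm
    (hf0 : ∀ v, 0 ≤ f v)
    (hfsmul : ∀ (a : ℝ) v, f (a • v) = |a| * f v) (hfcont : Continuous f)
    -- `g` is a seminorm, continuous in the `X`-norm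
    (hg0 : ∀ v, 0 ≤ g v) (hgadd : ∀ u v, g (u + v) ≤ g u + g v)
    (hgsmul : ∀ (a : ℝ) v, g (a • v) = |a| * g v) (hgcont : Continuous g)
    -- closed finite-dimensional subspace on which `f` is definite
    (P : Submodule ℝ X)
    (hfP : ∀ v ∈ P, f v = 0 → v = 0)
    -- `‖·‖_X` is equivalent to `g(·) + ‖ι ·‖_Y`
    (c₁ c₂ : ℝ) (hc₁ : 0 < c₁)
    (hequiv : ∀ v : X, c₁ * ‖v‖ ≤ g v + ‖ι v‖ ∧ g v + ‖ι v‖ ≤ c₂ * ‖v‖)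
    -- `g(v) = 0` forces `v ∈ P`
    (hgker : ∀ v : X, g v = 0 → v ∈ P) :
    ∃ C > 0, ∀ v : X, ‖v‖ ≤ C * (g v + f v) := by
  refine exists_norm_le_mul_of_not_tendsto_zero (p := g + f) (fun v => add_nonneg (hg0 v) (hf0 v))
    (fun a v => by simp only [Pi.add_apply, hgsmul, hfsmul, mul_add]) fun u hu hgf => ?_
  have hg : Tendsto (fun k => g (u k)) atTop (𝓝 0) :=
    squeeze_zero (fun k => hg0 _) (fun k => le_add_of_nonneg_right (hf0 _)) hgf
  have hf : Tendsto (fun k => f (u k)) atTop (𝓝 0) :=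
    squeeze_zero (fun k => hf0 _) (fun k => le_add_of_nonneg_left (hg0 _)) hgf
  have hbdd : Bornology.IsBounded (Set.range u) :=
    isBounded_iff_forall_norm_le.mpr ⟨1, by simp [hu]⟩
  obtain ⟨w, φ, hφ, hw⟩ := exists_subseq_tendsto_of_tendsto_seminorm_zero hcpt
    (Seminorm.of g hgadd hgsmul) hc₁ (fun v => (hequiv v).1) hbdd hg
  have hgw : g w = 0 := tendsto_nhds_unique ((hgcont.tendsto w).comp hw) (hg.comp hφ.tendsto_atTop)
  have hfw : f w = 0 := tendsto_nhds_unique ((hfcont.tendsto w).comp hw) (hf.comp hφ.tendsto_atTop)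
  have hw1 : ‖w‖ = 1 := tendsto_nhds_unique ((continuous_norm.tendsto w).comp hw)
    (by simp [Function.comp_def, hu])
  simp [hfP w (hgker w hgw) hfw] at hw1

/-- abstract Peetre-type compactness argument.  Let `X` be compactly embedded
in `Y` via `ι`, `f` a continuous seminorm on `X` definite on a closed finite-dimensional
subspace `P`, and `g` a continuous seminorm with `‖·‖_X` equivalent to `g(·) + ‖ι ·‖_Y`,
`g(v) = 0 → v ∈ P`, and `g` lower semicontinuous along `Y`-convergent, `X`-bounded sequences.
Then `‖v‖_X ≤ C (g v + f v)` for some `C > 0`. -/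
theorem statement7 {X Y : Type*} [NormedAddCommGroup X] [NormedSpace ℝ X] [CompleteSpace X]
    [NormedAddCommGroup Y] [NormedSpace ℝ Y] [CompleteSpace Y]
    (ι : X →L[ℝ] Y) (hinj : Function.Injective ι) (hcpt : IsCompactOperator ι)
    (f g : X → ℝ)
    -- `f` is a seminorm, continuous in the `X`-norm
    (hf0 : ∀ v, 0 ≤ f v) (hfadd : ∀ u v, f (u + v) ≤ f u + f v)
    (hfsmul : ∀ (a : ℝ) v, f (a • v) = |a| * f v) (hfcont : Continuous f)
    -- `g` is a seminorm, continuous in the `X`-norm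
    (hg0 : ∀ v, 0 ≤ g v) (hgadd : ∀ u v, g (u + v) ≤ g u + g v)
    (hgsmul : ∀ (a : ℝ) v, g (a • v) = |a| * g v) (hgcont : Continuous g)
    -- closed finite-dimensional subspace on which `f` is definite
    (P : Submodule ℝ X) [FiniteDimensional ℝ P] (hPclosed : IsClosed (P : Set X))
    (hfP : ∀ v ∈ P, f v = 0 → v = 0)
    -- `‖·‖_X` is equivalent to `g(·) + ‖ι ·‖_Y`
    (c₁ c₂ : ℝ) (hc₁ : 0 < c₁) (hc₂ : 0 < c₂)
    (hequiv : ∀ v : X, c₁ * ‖v‖ ≤ g v + ‖ι v‖ ∧ g v + ‖ι v‖ ≤ c₂ * ‖v‖)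
    -- `g(v) = 0` forces `v ∈ P`
    (hgker : ∀ v : X, g v = 0 → v ∈ P)
    -- lower semicontinuity of `g` with respect to `Y`-convergence on `X`-bounded sets
    (hlsc : ∀ (M : ℝ) (vk : ℕ → X) (w : X), (∀ k, ‖vk k‖ ≤ M) →
      Filter.Tendsto (fun k => ι (vk k)) Filter.atTop (nhds (ι w)) →
      g w ≤ Filter.liminf (fun k => g (vk k)) Filter.atTop) :
    ∃ C > 0, ∀ v : X, ‖v‖ ≤ C * (g v + f v) :=
  statement7_general ι hcpt f g hf0 hfsmul hfcont hg0 hgadd hgsmul hgcont P hfP c₁ c₂ hc₁ hequiv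
    hgker
end

section
/- Suppose for each j, (λ_{j,h} − λ_j)/λ_j ≥ C (j^{2/n} h²)^{r−1} (1 − j^{2/n} h²), and suppose the mesh size satisfies h = c N^{−1/n} (r−1)^{−1}. If the j-th numerical eigenvalue is required to have relative error at most h^{2θ(r−1)} for some θ ∈ (0,1], then j ≤ C' (r−1)^{(1−θ)n} N^{1−θ}. -/
/-! The lower bound on the relative error, in the regime `j^{2/n} h² ≤ 1/2`, is at least
`(C/2) (j^{2/n} h²)^{r-1}`; comparing with the required accuracy `(h^{2θ})^{r-1}` and taking
`(r-1)`-th roots gives `j^{2/n} h² ≲ h^{2θ}`, i.e. `j ≲ h^{-(1-θ)n}`. Substituting the mesh size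
`h ∼ N^{-1/n} (r-1)⁻¹` turns this into `j ≲ (r-1)^{(1-θ)n} N^{1-θ}`. -/

theorem le_max_one_inv_mul_of_mul_pow_le_pow {c x y : ℝ} {m : ℕ} (hc : 0 < c) (hx : 0 ≤ x)
    (hy : 0 ≤ y) (hm : m ≠ 0) (h : c * x ^ m ≤ y ^ m) : x ≤ max 1 c⁻¹ * y := by
  have hK : 1 ≤ max 1 c⁻¹ := le_max_left _ _
  rw [← pow_le_pow_iff_left₀ hx (by positivity) hm]
  calc x ^ m ≤ c⁻¹ * y ^ m := by rwa [← div_eq_inv_mul, le_div_iff₀' hc]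
    _ ≤ max 1 c⁻¹ ^ m * y ^ m := by
      gcongr
      exact (le_max_right _ _).trans (le_self_pow₀ hK hm)
    _ = (max 1 c⁻¹ * y) ^ m := (mul_pow _ _ _).symm

theorem le_rpow_mul_rpow_of_rpow_mul_sq_le {p j h K θ : ℝ} (hp : 0 < p) (hj : 0 ≤ j)
    (hh : 0 < h) (hK : 0 ≤ K) (hjh : j ^ (2 / p) * h ^ 2 ≤ K * h ^ (2 * θ)) :
    j ≤ K ^ (p / 2) * h ^ ((θ - 1) * p) := by
  have hsplit : h ^ (2 * θ) = h ^ (2 * θ - 2) * h ^ 2 := by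
    rw [← Real.rpow_natCast h 2, ← Real.rpow_add hh]
    norm_num
  have hroot : j ^ (p / 2)⁻¹ ≤ K * h ^ (2 * θ - 2) := by
    rwa [inv_div, ← mul_le_mul_iff_left₀ (pow_pos hh 2), mul_assoc, ← hsplit]
  rw [Real.rpow_inv_le_iff_of_pos hj (by positivity) (by positivity)] at hroot
  rwa [Real.mul_rpow hK (by positivity), ← Real.rpow_mul hh.le,
    show (2 * θ - 2) * (p / 2) = (θ - 1) * p by ring] at hroot

theorem mesh_rpow_eq {cm N s θ n : ℝ} (hcm : 0 < cm) (hN : 0 ≤ N) (hs : 0 < s) (hn : n ≠ 0) :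
    (cm * N ^ (-1 / n) * s⁻¹) ^ ((θ - 1) * n)
      = cm ^ ((θ - 1) * n) * s ^ ((1 - θ) * n) * N ^ (1 - θ) := by
  rw [Real.mul_rpow (by positivity) (by positivity), Real.mul_rpow hcm.le (by positivity),
    ← Real.rpow_mul hN, Real.inv_rpow hs.le, ← Real.rpow_neg hs.le]
  rw [show -1 / n * ((θ - 1) * n) = 1 - θ by field_simp; ring,
    show -((θ - 1) * n) = (1 - θ) * n by ring]
  ring

theorem statement9_general (n r : ℕ) (hn : 0 < n) (hr : 2 ≤ r)
    (C cm : ℝ) (hC : 0 < C) (hcm : 0 < cm)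
    (θ : ℝ) :
    ∃ C' > 0, ∀ (N j : ℕ) (h lamj lamjh : ℝ),
      0 < N → 0 < j → 0 < h → 0 < lamj →
      h = cm * (N : ℝ) ^ (-(1 : ℝ) / n) * ((r : ℝ) - 1)⁻¹ →
      (j : ℝ) ^ ((2 : ℝ) / n) * h ^ 2 ≤ 1 / 2 →
      (lamjh - lamj) / lamj ≥
        C * ((j : ℝ) ^ ((2 : ℝ) / n) * h ^ 2) ^ (r - 1) *
          (1 - (j : ℝ) ^ ((2 : ℝ) / n) * h ^ 2) →
      (lamjh - lamj) / lamj ≤ h ^ (2 * θ * ((r : ℝ) - 1)) →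
      (j : ℝ) ≤ C' * ((r : ℝ) - 1) ^ ((1 - θ) * (n : ℝ)) * (N : ℝ) ^ (1 - θ) := by
  refine ⟨max 1 (C / 2)⁻¹ ^ ((n : ℝ) / 2) * cm ^ ((θ - 1) * n), by positivity, ?_⟩
  intro N j h lamj lamjh _ _ hh _ hmesh hreg hlow hup
  set X := (j : ℝ) ^ ((2 : ℝ) / n) * h ^ 2
  have hr1 : (1 : ℝ) < r := by exact_mod_cast hr
  have hcast : ((r - 1 : ℕ) : ℝ) = (r : ℝ) - 1 := by push_cast [show 1 ≤ r by omega]; ring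
  have herr : C / 2 * X ^ (r - 1) ≤ (h ^ (2 * θ)) ^ (r - 1) := by
    have : 0 ≤ C * X ^ (r - 1) := by positivity
    calc C / 2 * X ^ (r - 1) ≤ C * X ^ (r - 1) * (1 - X) := by nlinarith
      _ ≤ h ^ (2 * θ * ((r : ℝ) - 1)) := hlow.trans hup
      _ = (h ^ (2 * θ)) ^ (r - 1) := by rw [Real.rpow_mul hh.le, ← hcast, Real.rpow_natCast]
  have hX := le_max_one_inv_mul_of_mul_pow_le_pow (by positivity) (by positivity)
    (by positivity) (by omega) herr
  calc (j : ℝ) ≤ max 1 (C / 2)⁻¹ ^ ((n : ℝ) / 2) * h ^ ((θ - 1) * n) :=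
        le_rpow_mul_rpow_of_rpow_mul_sq_le (by positivity) (by positivity) hh (by positivity) hX
    _ = _ := by rw [hmesh, mesh_rpow_eq hcm (by positivity) (by linarith) (by positivity)]; ring

/-- Theorem 4.4, inequality (4.13): number of reliable eigenvalues.
If `(λ_{j,h} − λ_j)/λ_j ≥ C (j^{2/n} h²)^{r−1} (1 − j^{2/n} h²)`, the mesh size satisfies
`h = c N^{−1/n} (r−1)⁻¹`, one is in the regime `j^{2/n} h² ≤ 1/2`, and the `j`-th numerical
eigenvalue has relative error at most `h^{2θ(r−1)}` for some `θ ∈ (0,1]`, then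
`j ≤ C' (r−1)^{(1−θ)n} N^{1−θ}`. -/
theorem statement9 (n r : ℕ) (hn : 0 < n) (hr : 2 ≤ r)
    (C cm : ℝ) (hC : 0 < C) (hcm : 0 < cm)
    (θ : ℝ) (hθ0 : 0 < θ) (hθ1 : θ ≤ 1) :
    ∃ C' > 0, ∀ (N j : ℕ) (h lamj lamjh : ℝ),
      0 < N → 0 < j → 0 < h → 0 < lamj →
      h = cm * (N : ℝ) ^ (-(1 : ℝ) / n) * ((r : ℝ) - 1)⁻¹ →
      (j : ℝ) ^ ((2 : ℝ) / n) * h ^ 2 ≤ 1 / 2 →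
      (lamjh - lamj) / lamj ≥
        C * ((j : ℝ) ^ ((2 : ℝ) / n) * h ^ 2) ^ (r - 1) *
          (1 - (j : ℝ) ^ ((2 : ℝ) / n) * h ^ 2) →
      (lamjh - lamj) / lamj ≤ h ^ (2 * θ * ((r : ℝ) - 1)) →
      (j : ℝ) ≤ C' * ((r : ℝ) - 1) ^ ((1 - θ) * (n : ℝ)) * (N : ℝ) ^ (1 - θ) :=
  statement9_general n r hn hr C cm hC hcm θ
end
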